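/- Let A be a complex Banach algebra. If a ∈ A has a generalized Hirano inverse, then for every n ≥ 1 the element aⁿ has a generalized Hirano inverse and (aⁿ)^h = (a^h)ⁿ. -/

import Mathlib

/-- `a` is quasinilpotent: `1 + a*x` is a unit for every `x` commuting with `a`. -/
def IsQuasinilpotent {R : Type*} [Ring R] (a : R) : Prop :=
  ∀ x : R, x * a = a * x → IsUnit (1 + a * x)

/-- `x` lies in the double commutant of `a`. -/
def InDoubleCommutant {R : Type*} [Ring R] (a x : R) : Prop :=
  ∀ y : R, y * a = a * y → x * y = y * x

/-- `b` is a generalized Hirano inverse of `a`. -/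
def IsGHInverse {R : Type*} [Ring R] (a b : R) : Prop :=
  b * a * b = b ∧ InDoubleCommutant a b ∧ IsQuasinilpotent (a ^ 2 - a * b)

/-!
Since `b` commutes with `a`, `b ^ n * a ^ n * b ^ n = (b * a * b) ^ n = b ^ n`, and
`(a ^ n) ^ 2 - a ^ n * b ^ n = (a ^ 2) ^ n - (a * b) ^ n` is `a ^ 2 - a * b` times a geometric sum
commuting with it, hence quasinilpotent. The double commutant condition then comes for free: in a
Banach algebra it already follows from the other two conditions once `b` commutes with `a`. Indeed `p = a * b` is an idempotent and
`a ^ 2 = p + r` with `r` quasinilpotent and commuting with `p`. If `y` commutes with `a`, then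
`w = p * y * (1 - p)` satisfies `(1 + r) * w = w * r`, so `w = (1 + r)⁻¹ ^ k * w * r ^ k` for all
`k`, which forces `w = 0` by Gelfand's formula; likewise `(1 - p) * y * p = 0`, so `y` commutes
with `p`. Finally `b = p * a * (1 + r * p)⁻¹` is built from elements commuting with `y`.
-/

open Filter
open scoped ENNReal

theorem eq_zero_of_eq_mul_mul_of_norm_pow_mul_lt_one {R : Type*} [NormedRing R] {s t w : R}
    (h : w = s * w * t) {n : ℕ} (hn : ‖s ^ n‖ * ‖t ^ n‖ < 1) : w = 0 := by
  have hpow : ∀ k : ℕ, s ^ k * w * t ^ k = w := by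
    intro k
    induction k with
    | zero => simp
    | succ k ih => calc
        s ^ (k + 1) * w * t ^ (k + 1) = s ^ k * (s * w * t) * t ^ k := by
          rw [pow_succ, pow_succ']; simp only [mul_assoc]
        _ = w := by rw [← h, ih]
  have hle : ‖w‖ ≤ ‖s ^ n‖ * ‖t ^ n‖ * ‖w‖ := calc
    ‖w‖ = ‖s ^ n * w * t ^ n‖ := by rw [hpow]
    _ ≤ ‖s ^ n‖ * ‖w‖ * ‖t ^ n‖ := norm_mul₃_le
    _ = ‖s ^ n‖ * ‖t ^ n‖ * ‖w‖ := by ring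
  exact norm_le_zero_iff.mp (by nlinarith [norm_nonneg w])

section

variable {A : Type*} [NormedRing A] [NormedAlgebra ℂ A] [CompleteSpace A]

theorem Commute.spectralRadius_mul_le {a b : A} (h : Commute a b) :
    spectralRadius ℂ (a * b) ≤ spectralRadius ℂ a * ‖b‖₊ := by
  refine le_of_tendsto_of_tendsto (spectrum.pow_nnnorm_pow_one_div_tendsto_nhds_spectralRadius _)
    (ENNReal.Tendsto.mul_const (spectrum.pow_nnnorm_pow_one_div_tendsto_nhds_spectralRadius a)
      (Or.inr ENNReal.coe_ne_top)) ?_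
  filter_upwards [eventually_ne_atTop 0] with n hn
  calc (‖(a * b) ^ n‖₊ : ℝ≥0∞) ^ (1 / n : ℝ)
      ≤ ((‖a ^ n‖₊ : ℝ≥0∞) * (‖b‖₊ : ℝ≥0∞) ^ n) ^ (1 / n : ℝ) := by
        gcongr
        rw [h.mul_pow]
        exact_mod_cast (nnnorm_mul_le _ _).trans
          (by gcongr; exact nnnorm_pow_le' b (Nat.pos_of_ne_zero hn))
    _ = (‖a ^ n‖₊ : ℝ≥0∞) ^ (1 / n : ℝ) * ‖b‖₊ := by
        rw [ENNReal.mul_rpow_of_nonneg _ _ (by positivity), one_div,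
          ENNReal.pow_rpow_inv_natCast hn]

theorem exists_norm_pow_lt_one_of_spectralRadius_lt_one {a : A}
    (h : spectralRadius ℂ a < 1) : ∃ n ≠ 0, ‖a ^ n‖ < 1 := by
  obtain ⟨n, hlt, hn⟩ :=
    (((spectrum.pow_nnnorm_pow_one_div_tendsto_nhds_spectralRadius a).eventually_lt_const h).and
      (eventually_ne_atTop 0)).exists
  refine ⟨n, hn, ?_⟩
  by_contra! hle
  have : (1 : ℝ≥0∞) ≤ ‖a ^ n‖₊ := by exact_mod_cast hle
  exact (ENNReal.one_le_rpow this (by positivity)).not_gt hlt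

theorem exists_norm_pow_mul_norm_pow_lt_one (s : A) {t : A} (ht : spectralRadius ℂ t = 0) :
    ∃ n, ‖s ^ n‖ * ‖t ^ n‖ < 1 := by
  have hρ : spectralRadius ℂ (t * algebraMap ℂ A ‖s‖) < 1 := by
    refine (Algebra.commute_algebraMap_right _ t).spectralRadius_mul_le.trans_lt ?_
    simp [ht]
  obtain ⟨n, hn, hlt⟩ := exists_norm_pow_lt_one_of_spectralRadius_lt_one hρ
  refine ⟨n, lt_of_le_of_lt ?_ hlt⟩
  rw [← Algebra.commutes, ← Algebra.smul_def, smul_pow, norm_smul]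
  simp only [norm_pow, Complex.norm_real, norm_norm]
  gcongr
  exact norm_pow_le' s (Nat.pos_of_ne_zero hn)

theorem eq_zero_of_eq_mul_mul {s t w : A} (h : w = s * w * t)
    (hst : spectralRadius ℂ s = 0 ∨ spectralRadius ℂ t = 0) : w = 0 := by
  obtain ⟨n, hn⟩ : ∃ n, ‖s ^ n‖ * ‖t ^ n‖ < 1 := by
    rcases hst with hs | ht
    · simpa only [mul_comm] using exists_norm_pow_mul_norm_pow_lt_one t hs
    · exact exists_norm_pow_mul_norm_pow_lt_one s ht
  exact eq_zero_of_eq_mul_mul_of_norm_pow_mul_lt_one h hn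

theorem isQuasinilpotent_iff_spectralRadius_eq_zero {a : A} :
    IsQuasinilpotent a ↔ spectralRadius ℂ a = 0 := by
  constructor
  · intro h
    refine le_antisymm (iSup₂_le fun k hk => ?_) zero_le
    suffices k = 0 by simp [this]
    by_contra hk0
    have hunit : IsUnit (algebraMap ℂ A k * (1 + a * algebraMap ℂ A (-k⁻¹))) :=
      (isUnit_iff_ne_zero.mpr hk0).map (algebraMap ℂ A) |>.mul
        (h _ (Algebra.commute_algebraMap_left _ a))
    refine spectrum.mem_iff.mp hk ?_
    convert hunit using 1
    rw [mul_add, mul_one, ← mul_assoc, Algebra.commutes, mul_assoc, ← map_mul,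
      mul_neg, mul_inv_cancel₀ hk0, map_neg, map_one, mul_neg, mul_one, sub_eq_add_neg]
  · intro h x hx
    have hax : spectralRadius ℂ (a * x) = 0 :=
      le_antisymm (by simpa [h] using (Commute.symm hx).spectralRadius_mul_le) zero_le
    simpa using spectrum.isUnit_one_sub_smul_of_lt_inv_radius (a := a * x) (z := (-1 : ℂ))
      (by simp [hax])

theorem IsQuasinilpotent.mul_of_commute {a b : A} (ha : IsQuasinilpotent a) (hab : Commute a b) :
    IsQuasinilpotent (a * b) := by
  rw [isQuasinilpotent_iff_spectralRadius_eq_zero] at ha ⊢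
  exact le_antisymm (by simpa [ha] using hab.spectralRadius_mul_le) zero_le

theorem Commute.isQuasinilpotent_pow_sub_pow {x y : A} (hxy : Commute x y)
    (h : IsQuasinilpotent (x - y)) (n : ℕ) : IsQuasinilpotent (x ^ n - y ^ n) := by
  have hx : Commute (x - y) x := (Commute.refl x).sub_left hxy.symm
  have hy : Commute (x - y) y := hxy.sub_left (Commute.refl y)
  rw [← hxy.mul_geom_sum₂]
  exact h.mul_of_commute <| Commute.sum_right _ _ _ fun i _ =>
    (hx.pow_right i).mul_right (hy.pow_right _)

theorem IsIdempotentElem.inDoubleCommutant_add {p r : A} (hp : IsIdempotentElem p)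
    (hr : IsQuasinilpotent r) (hpr : Commute p r) : InDoubleCommutant (p + r) p := by
  intro y hy
  obtain ⟨u, hu⟩ : IsUnit (1 + r) := by simpa using hr 1 (by simp)
  have hρ := isQuasinilpotent_iff_spectralRadius_eq_zero.mp hr
  have hrq : Commute r (1 - p) := ((Commute.one_left r).sub_left hpr).symm
  have hqp : (1 - p) * p = 0 := hp.one_sub_mul_self
  have h₁ : p * y * (1 - p) = 0 := by
    have hpx : p * (p + r) = (1 + r) * p := by rw [mul_add, hp.eq, add_mul, one_mul, hpr.eq]
    have hxq : (p + r) * (1 - p) = (1 - p) * r := by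
      rw [add_mul, hp.mul_one_sub_self, zero_add, hrq.eq]
    have hw : (1 + r) * (p * y * (1 - p)) = p * y * (1 - p) * r := calc
      _ = p * (p + r) * y * (1 - p) := by rw [hpx]; simp only [mul_assoc]
      _ = p * (y * (p + r)) * (1 - p) := by rw [hy]; simp only [mul_assoc]
      _ = p * y * (1 - p) * r := by simp only [mul_assoc, hxq]
    refine eq_zero_of_eq_mul_mul (s := ↑u⁻¹) (t := r) ?_ (Or.inr hρ)
    rw [mul_assoc (↑u⁻¹ : A), ← hw, ← hu, ← mul_assoc, Units.inv_mul, one_mul]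
  have h₂ : (1 - p) * y * p = 0 := by
    have hqx : r * (1 - p) = (1 - p) * (p + r) := by rw [mul_add, hqp, zero_add, hrq.eq]
    have hxp : (p + r) * p = p * (1 + r) := by
      rw [add_mul, hp.eq, mul_add, mul_one, hpr.eq]
    have hw : r * ((1 - p) * y * p) = (1 - p) * y * p * (1 + r) := calc
      _ = (1 - p) * (p + r) * y * p := by rw [← hqx]; simp only [mul_assoc]
      _ = (1 - p) * (y * (p + r)) * p := by rw [hy]; simp only [mul_assoc]
      _ = (1 - p) * y * p * (1 + r) := by simp only [mul_assoc, hxp]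
    refine eq_zero_of_eq_mul_mul (s := r) (t := ↑u⁻¹) ?_ (Or.inl hρ)
    rw [hw, ← hu, mul_assoc _ (u : A), Units.mul_inv, mul_one]
  calc p * y = p * y * p := by simpa [mul_sub, sub_eq_zero] using h₁
    _ = y * p := by simpa [sub_mul, sub_eq_zero, eq_comm] using h₂

theorem inDoubleCommutant_of_commute {a b : A} (hab : Commute a b) (hbab : b * a * b = b)
    (hq : IsQuasinilpotent (a ^ 2 - a * b)) : InDoubleCommutant a b := by
  set p := a * b with hp_def
  set r := a ^ 2 - p
  have hp : IsIdempotentElem p := by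
    rw [IsIdempotentElem, hp_def, mul_assoc, ← mul_assoc b, hbab]
  have hbp : b * p = b := by rw [← mul_assoc, hbab]
  have hpr : Commute p r :=
    (((Commute.refl a).mul_right hab).pow_left 2).symm.sub_right (Commute.refl p)
  obtain ⟨u, hu⟩ : IsUnit (1 + r * p) := hq p hpr.eq
  have hbu : b * u = p * a := calc
    b * u = b + b * (a ^ 2 * p) - b * (p * p) := by
      rw [hu]; simp only [r]; noncomm_ring
    _ = b + a ^ 2 * (b * p) - b * p := by
      rw [hp.eq, ← mul_assoc b, (hab.symm.pow_right 2).eq, mul_assoc]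
    _ = p * a := by rw [hbp, add_sub_cancel_left, sq, mul_assoc, hab.eq, hp_def, mul_assoc]
  intro y hy
  have hya : Commute y a := hy
  have hyp : Commute y p := .symm <| hp.inDoubleCommutant_add hq hpr y <| by
    rw [add_sub_cancel]; exact (hya.pow_right 2).eq
  have hyu : Commute y u := hu ▸ (Commute.one_right y).add_right
    (((hya.pow_right 2).sub_right hyp).mul_right hyp)
  rw [(Units.eq_mul_inv_iff_mul_eq u).mpr hbu]
  exact ((hyp.mul_right hya).mul_right hyu.units_inv_right).symm.eq

end

theorem stmt15 {A : Type*} [NormedRing A] [NormedAlgebra ℂ A] [CompleteSpace A]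
    (a b : A) (h : IsGHInverse a b) :
    ∀ n : ℕ, 1 ≤ n → IsGHInverse (a ^ n) (b ^ n) := by
  obtain ⟨hbab, hb, hq⟩ := h
  have hab : Commute a b := (hb a rfl).symm
  intro n _
  have hbab_n : b ^ n * a ^ n * b ^ n = b ^ n := by
    rw [← hab.symm.mul_pow, ← ((Commute.refl b).mul_left hab).mul_pow, hbab]
  have hq_n : IsQuasinilpotent ((a ^ n) ^ 2 - a ^ n * b ^ n) := by
    rw [pow_right_comm a n 2, ← hab.mul_pow]
    exact (((Commute.refl a).mul_right hab).pow_left 2).isQuasinilpotent_pow_sub_pow hq n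
  exact ⟨hbab_n, inDoubleCommutant_of_commute (hab.pow_pow n n) hbab_n hq_n, hq_n⟩
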